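/- In a Dedekind $\sigma$-complete Boolean algebra, an infinite pre-Rademacher family $(r_i)_{i\in I}$ is hereditarily atomless if and only if it vanishes at infinity, i.e., $\inf_{j\in J}\theta_j r_j = \mathbf{0}$ for every infinite $J \subseteq I$ and every collection of signs $\theta_j = \pm 1$. -/

import Mathlib

/-- The product of a sign by an element of a Boolean algebra: `1 ⬝ x = x`, `(-1) ⬝ x = xᶜ`. -/
def sgn {α : Type*} [BooleanAlgebra α] (θ : Bool) (x : α) : α := if θ then x else xᶜ

/-- A pre-Rademacher family: a family of distinct elements all of whose finite
particles are nonzero. -/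
def IsPreRademacher {α ι : Type*} [BooleanAlgebra α] (r : ι → α) : Prop :=
  Function.Injective r ∧
    ∀ (J : Finset ι) (θ : ι → Bool), J.inf (fun j => sgn (θ j) (r j)) ≠ ⊥

/-- A subset of a Boolean algebra which is a subalgebra. -/
def IsSubalg {α : Type*} [BooleanAlgebra α] (S : Set α) : Prop :=
  ⊥ ∈ S ∧ ⊤ ∈ S ∧ (∀ x ∈ S, xᶜ ∈ S) ∧
    (∀ x ∈ S, ∀ y ∈ S, x ⊔ y ∈ S) ∧ (∀ x ∈ S, ∀ y ∈ S, x ⊓ y ∈ S)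

/-- A set is order closed if it contains all existing suprema of its subsets. -/
def IsOrderClosedSet {α : Type*} [BooleanAlgebra α] (S : Set α) : Prop :=
  ∀ C ⊆ S, ∀ b : α, IsLUB C b → b ∈ S

/-- The smallest order closed subalgebra containing `R`. -/
def tauSubalg {α : Type*} [BooleanAlgebra α] (R : Set α) : Set α :=
  ⋂₀ {S : Set α | IsSubalg S ∧ IsOrderClosedSet S ∧ R ⊆ S}

/-- `a` is an atom of the Boolean algebra structured on the subset `S`. -/
def IsAtomIn {α : Type*} [BooleanAlgebra α] (S : Set α) (a : α) : Prop :=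
  a ∈ S ∧ a ≠ ⊥ ∧ ∀ x ∈ S, x ≤ a → x = ⊥ ∨ x = a

/-- A family vanishes at infinity if for every infinite `J ⊆ I` and all signs,
`⊥` is the infimum of `{θⱼ rⱼ : j ∈ J}`, i.e. every lower bound is `⊥`. -/
def VanishesAtInfinity {α ι : Type*} [BooleanAlgebra α] (r : ι → α) : Prop :=
  ∀ J : Set ι, J.Infinite → ∀ θ : ι → Bool, ∀ x : α,
    (∀ j ∈ J, x ≤ sgn (θ j) (r j)) → x = ⊥

/-- A family is hereditarily atomless if for every infinite subfamily the smallest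
order closed subalgebra it generates is atomless. -/
def HereditarilyAtomless {α ι : Type*} [BooleanAlgebra α] (r : ι → α) : Prop :=
  ∀ J : Set ι, J.Infinite → ∀ a : α, ¬ IsAtomIn (tauSubalg (r '' J)) a

section helpers
variable {α : Type*} [BooleanAlgebra α] (R : Set α)

lemma subset_tau : R ⊆ tauSubalg R := fun _ hx S hS => hS.2.2 hx

lemma tau_isSubalg : IsSubalg (tauSubalg R) := by
  refine ⟨?_, ?_, ?_, ?_, ?_⟩
  · intro S hS; exact hS.1.1
  · intro S hS; exact hS.1.2.1
  · intro x hx S hS; exact hS.1.2.2.1 x (hx S hS)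
  · intro x hx y hy S hS; exact hS.1.2.2.2.1 x (hx S hS) y (hy S hS)
  · intro x hx y hy S hS; exact hS.1.2.2.2.2 x (hx S hS) y (hy S hS)

lemma tau_orderClosed : IsOrderClosedSet (tauSubalg R) := by
  intro C hC b hb S hS
  exact hS.2.1 C (fun x hx => hC hx S hS) b hb

lemma tau_min {S : Set α} (h1 : IsSubalg S) (h2 : IsOrderClosedSet S) (h3 : R ⊆ S) :
    tauSubalg R ⊆ S := fun x hx => hx S ⟨h1, h2, h3⟩

lemma finset_inf_mem_tau {ι : Type*} (F : Finset ι) (f : ι → α)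
    (h : ∀ i ∈ F, f i ∈ tauSubalg R) : F.inf f ∈ tauSubalg R := by
  classical
  induction F using Finset.induction with
  | empty => simpa using (tau_isSubalg R).2.1
  | insert _ _ hx ih =>
      rw [Finset.inf_insert]
      exact (tau_isSubalg R).2.2.2.2 _ (h _ (Finset.mem_insert_self _ _)) _
        (ih fun i hi => h i (Finset.mem_insert_of_mem hi))

lemma sgn_mem_tau (x : α) (hx : x ∈ tauSubalg R) (θ : Bool) : sgn θ x ∈ tauSubalg R := by
  cases θ with
  | true => simpa [sgn] using hx
  | false => simpa [sgn] using (tau_isSubalg R).2.2.1 x hx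

end helpers

/-- In a Dedekind `σ`-complete Boolean algebra, an infinite pre-Rademacher family is
hereditarily atomless iff it vanishes at infinity. -/
theorem stmt11 {α ι : Type*} [BooleanAlgebra α] [Infinite ι]
    (hσ : ∀ f : ℕ → α, ∃ b, IsLUB (Set.range f) b)
    (r : ι → α) (hR : IsPreRademacher r) :
    HereditarilyAtomless r ↔ VanishesAtInfinity r := by
  classical
  constructor
  · -- HereditarilyAtomless → VanishesAtInfinity
    intro hHA J hJ θ x hx
    by_contra hxne
    -- pick a countable infinite subset of J
    set f := hJ.natEmbedding
    set e : ℕ → ι := fun n => (f n : ι) with he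
    have he_inj : Function.Injective e :=
      fun a b h => f.injective (Subtype.val_injective h)
    have he_mem : ∀ n, e n ∈ J := fun n => (f n).2
    set J₀ : Set ι := Set.range e with hJ₀def
    have hJ₀ : J₀.Infinite := Set.infinite_range_of_injective he_inj
    set R : Set α := r '' J₀ with hRdef
    set q : ℕ → α := fun n => (Finset.range (n + 1)).inf (fun k => sgn (θ (e k)) (r (e k)))
      with hq
    obtain ⟨c, hc⟩ := hσ (fun n => (q n)ᶜ)
    set b : α := cᶜ with hb
    -- memberships
    have hr_mem : ∀ n, r (e n) ∈ tauSubalg R :=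
      fun n => subset_tau R ⟨e n, ⟨n, rfl⟩, rfl⟩
    have hq_mem : ∀ n, q n ∈ tauSubalg R := fun n =>
      finset_inf_mem_tau R _ _ (fun k _ => sgn_mem_tau R _ (hr_mem k) _)
    have hc_mem : c ∈ tauSubalg R := by
      refine tau_orderClosed R _ ?_ c hc
      rintro _ ⟨n, rfl⟩
      exact (tau_isSubalg R).2.2.1 _ (hq_mem n)
    have hb_mem : b ∈ tauSubalg R := (tau_isSubalg R).2.2.1 _ hc_mem
    -- x ≤ q n
    have hxq : ∀ n, x ≤ q n := fun n =>
      Finset.le_inf fun k _ => hx (e k) (he_mem k)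
    -- b ≤ q n
    have hbq : ∀ n, b ≤ q n := fun n => by
      have := compl_le_compl (hc.1 (Set.mem_range_self n))
      simpa using this
    -- x ≤ b
    have hxb : x ≤ b := by
      have h1 : c ≤ xᶜ := hc.2 (by rintro _ ⟨n, rfl⟩; exact compl_le_compl (hxq n))
      have := compl_le_compl h1
      simpa [hb] using this
    have hbne : b ≠ ⊥ := fun h => hxne (le_bot_iff.mp (h ▸ hxb))
    -- the separating subalgebra
    set S : Set α := {s | b ≤ s ∨ s ≤ bᶜ} with hSdef
    have hS1 : IsSubalg S := by
      refine ⟨Or.inr bot_le, Or.inl le_top, ?_, ?_, ?_⟩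
      · rintro s (h | h)
        · exact Or.inr (compl_le_compl h)
        · exact Or.inl (le_compl_iff_le_compl.mp h)
      · rintro s (h | h) t ht
        · exact Or.inl (h.trans le_sup_left)
        · rcases ht with h' | h'
          · exact Or.inl (h'.trans le_sup_right)
          · exact Or.inr (sup_le h h')
      · rintro s hs t (h | h)
        · rcases hs with h' | h'
          · exact Or.inl (le_inf h' h)
          · exact Or.inr (inf_le_left.trans h')
        · exact Or.inr (inf_le_right.trans h)
    have hS2 : IsOrderClosedSet S := by
      intro C hC u hu
      by_cases hcase : ∃ s ∈ C, b ≤ s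
      · obtain ⟨s, hsC, hbs⟩ := hcase
        exact Or.inl (hbs.trans (hu.1 hsC))
      · push_neg at hcase
        refine Or.inr (hu.2 ?_)
        intro s hsC
        rcases hC hsC with h | h
        · exact absurd h (hcase s hsC)
        · exact h
    have hS3 : R ⊆ S := by
      rintro _ ⟨_, ⟨k, rfl⟩, rfl⟩
      have hq' : q k ≤ sgn (θ (e k)) (r (e k)) :=
        Finset.inf_le (Finset.mem_range.mpr (Nat.lt_succ_self k))
      have hbs : b ≤ sgn (θ (e k)) (r (e k)) := (hbq k).trans hq'
      cases hθ : θ (e k) with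
      | true => exact Or.inl (by simpa [sgn, hθ] using hbs)
      | false =>
        refine Or.inr ?_
        have : b ≤ (r (e k))ᶜ := by simpa [sgn, hθ] using hbs
        exact le_compl_iff_le_compl.mp this
    -- b is an atom
    refine hHA J₀ hJ₀ b ⟨hb_mem, hbne, ?_⟩
    intro y hy hyb
    rcases tau_min R hS1 hS2 hS3 hy with h | h
    · exact Or.inr (le_antisymm hyb h)
    · exact Or.inl (le_bot_iff.mp (le_inf hyb h |>.trans (by simp)))
  · -- VanishesAtInfinity → HereditarilyAtomless
    intro hV J hJ a ha
    obtain ⟨haT, hane, hmin⟩ := ha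
    set T := tauSubalg (r '' J) with hT
    have key : ∀ j ∈ J, a ≤ r j ∨ a ≤ (r j)ᶜ := by
      intro j hj
      have hrj : r j ∈ T := subset_tau _ ⟨j, hj, rfl⟩
      have hinf : a ⊓ r j ∈ T := (tau_isSubalg _).2.2.2.2 _ haT _ hrj
      rcases hmin _ hinf inf_le_left with h | h
      · exact Or.inr (by
          have : Disjoint a (r j) := disjoint_iff.mpr h
          exact this.le_compl_right)
      · exact Or.inl (inf_eq_left.mp h)
    set θ : ι → Bool := fun j => decide (a ≤ r j) with hθ
    have : a = ⊥ := by
      refine hV J hJ θ a ?_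
      intro j hj
      by_cases h : a ≤ r j
      · simpa [sgn, hθ, h]
      · rcases key j hj with h' | h'
        · exact absurd h' h
        · simpa [sgn, hθ, h]
    exact hane this
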